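/- arXiv:2310.08663 — 5 statements merged into one kernel-verified Lean document; each statement's English description precedes it below -/
import Mathlib

section
/- A smallest cycle containing a given edge e of a graph G is a min-cycle: for every pair of vertices u, v on the cycle C, the shorter of the two paths between u and v along C has length equal to d_G(u, v). -/
/-!
Let `u, w` lie on `C` and let `P` be a shortest `u`–`w` path in `G`. If `P` avoids `e`, cut `C`
at `u` and `w` into two arcs, the arc `B` carrying `e`; then `P` followed by `B` is a closed walk
through `e` exactly once, so it contains a cycle through `e`, and minimality of `C` forces the
other arc to be no longer than `P`. If `P` uses `e = xy`, the two pieces of `P` on either side of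
`e` avoid `e` and join vertices of `C`, so the first case applies to each of them.
-/

namespace SimpleGraph

variable {V : Type*} {G : SimpleGraph V}

namespace Walk

theorem exists_eq_append_cons_of_mem_edges {e : Sym2 V} :
    ∀ {u v : V} {p : G.Walk u v}, e ∈ p.edges →
      ∃ (x y : V) (h : G.Adj x y) (r₁ : G.Walk u x) (r₂ : G.Walk y v),
        s(x, y) = e ∧ p = r₁.append (cons h r₂)
  | _, _, nil, he => by simp at he
  | u, _, cons (v := c) h p, he => by
    by_cases hce : s(u, c) = e
    · exact ⟨u, c, h, nil, p, hce, rfl⟩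
    · have hep : e ∈ p.edges := (List.mem_cons.1 he).resolve_left (Ne.symm hce)
      obtain ⟨x, y, h', r₁, r₂, hxy, rfl⟩ := exists_eq_append_cons_of_mem_edges hep
      exact ⟨x, y, h', cons h r₁, r₂, hxy, rfl⟩

theorem IsTrail.exists_eq_append_cons_of_mem_edges {u v : V} {p : G.Walk u v} {e : Sym2 V}
    (hp : p.IsTrail) (he : e ∈ p.edges) :
    ∃ (x y : V) (h : G.Adj x y) (r₁ : G.Walk u x) (r₂ : G.Walk y v),
      s(x, y) = e ∧ p = r₁.append (cons h r₂) ∧ e ∉ r₁.edges ∧ e ∉ r₂.edges := by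
  obtain ⟨x, y, h, r₁, r₂, rfl, rfl⟩ := Walk.exists_eq_append_cons_of_mem_edges he
  have hnodup := hp.edges_nodup
  simp only [edges_append, edges_cons, List.nodup_append, List.nodup_cons,
    List.mem_cons] at hnodup
  exact ⟨x, y, h, r₁, r₂, rfl, rfl, fun h₁ => hnodup.2.2 _ h₁ _ (.inl rfl) rfl, hnodup.2.1.1⟩

theorem length_mapToSubgraph : ∀ {u v : V} (p : G.Walk u v),
    p.mapToSubgraph.length = p.length
  | _, _, nil => rfl
  | _, _, cons _ p => congrArg (· + 1) ((length_map _ _).trans (length_mapToSubgraph p))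

end Walk

namespace Subgraph

theorem dist_coe_le_length {H : G.Subgraph} {u v : V} (p : G.Walk u v)
    (hp : p.toSubgraph ≤ H) (hu : u ∈ H.verts) (hv : v ∈ H.verts) :
    H.coe.dist ⟨u, hu⟩ ⟨v, hv⟩ ≤ p.length := by
  have h := dist_le (p.mapToSubgraph.map (Subgraph.inclusion hp))
  rwa [Walk.length_map, Walk.length_mapToSubgraph] at h

theorem dist_le_dist_coe {H : G.Subgraph} {u v : H.verts} (h : H.coe.Reachable u v) :
    G.dist u v ≤ H.coe.dist u v := by
  obtain ⟨p, hp⟩ := h.exists_walk_length_eq_dist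
  exact hp ▸ (dist_le (p.map H.hom)).trans_eq (p.length_map _)

end Subgraph

section ShortestCycleThroughEdge

variable {e : Sym2 V} {a : V} {C : G.Walk a a}
  (hmin : ∀ (b : V) (C' : G.Walk b b), C'.IsCycle → e ∈ C'.edges → C.length ≤ C'.length)
include hmin

theorem length_le_length_add_one_of_notMem_edges {x y : V} (h : G.Adj x y) (hxy : s(x, y) = e)
    (p : G.Walk y x) (hp : e ∉ p.edges) : C.length ≤ p.length + 1 := by
  classical
  have hcycle : (Walk.cons h p.bypass).IsCycle :=
    (Walk.cons_isCycle_iff _ h).2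
      ⟨p.bypass_isPath, fun h' => hp (hxy ▸ p.edges_bypass_subset_edges h')⟩
  calc C.length ≤ (Walk.cons h p.bypass).length := hmin _ _ hcycle (by simp [hxy])
    _ ≤ p.length + 1 := by simpa using p.length_bypass_le_length

theorem length_le_of_isTrail_of_mem_edges {u w : V} (q₁ : G.Walk u w) (q₂ : G.Walk w u)
    (hlen : q₁.length + q₂.length = C.length) (hq₂ : q₂.IsTrail) (he : e ∈ q₂.edges)
    (p : G.Walk u w) (hp : e ∉ p.edges) : q₁.length ≤ p.length := by
  obtain ⟨x, y, h, r₁, r₂, hxy, rfl, hr₁, hr₂⟩ := hq₂.exists_eq_append_cons_of_mem_edges he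
  have hbound := length_le_length_add_one_of_notMem_edges hmin h hxy (r₂.append (p.append r₁))
    (by simp [hr₁, hr₂, hp])
  simp only [Walk.length_append, Walk.length_cons] at hlen hbound
  omega

theorem exists_walk_toSubgraph_le_of_notMem_edges (hC : C.IsTrail) (heC : e ∈ C.edges)
    {u w : V} (hu : u ∈ C.support) (hw : w ∈ C.support) (p : G.Walk u w) (hp : e ∉ p.edges) :
    ∃ q : G.Walk u w, q.toSubgraph ≤ C.toSubgraph ∧ q.length ≤ p.length := by
  classical
  set C₁ := C.rotate u hu
  have hw₁ : w ∈ C₁.support := (C.mem_support_rotate_iff u hu).2 hw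
  have hspec : (C₁.takeUntil w hw₁).append (C₁.dropUntil w hw₁) = C₁ := C₁.take_spec hw₁
  have hC₁ : C₁.IsTrail := hC.rotate hu
  have hsub : C₁.toSubgraph = C.toSubgraph := C.toSubgraph_rotate hu
  have hlen := congrArg Walk.length hspec
  have heC₁ : e ∈ C₁.edges := (C.rotate_edges u hu).perm.mem_iff.2 heC
  rw [Walk.length_append, Walk.length_rotate] at hlen
  rw [← hspec, Walk.edges_append, List.mem_append] at heC₁
  rw [← hsub, ← hspec, Walk.toSubgraph_append]
  rcases heC₁ with he₁ | he₂
  · refine ⟨(C₁.dropUntil w hw₁).reverse, by simp, ?_⟩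
    exact length_le_of_isTrail_of_mem_edges hmin _ _ (by simp; omega)
      (hC₁.takeUntil hw₁).reverse (by simpa using he₁) p hp
  · exact ⟨_, le_sup_left,
      length_le_of_isTrail_of_mem_edges hmin _ _ hlen (hC₁.dropUntil hw₁) he₂ p hp⟩

theorem exists_walk_toSubgraph_le_of_isTrail (hC : C.IsTrail) (heC : e ∈ C.edges)
    {u w : V} (hu : u ∈ C.support) (hw : w ∈ C.support) (p : G.Walk u w) (hp : p.IsTrail) :
    ∃ q : G.Walk u w, q.toSubgraph ≤ C.toSubgraph ∧ q.length ≤ p.length := by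
  by_cases he : e ∈ p.edges
  · obtain ⟨x, y, h, r₁, r₂, rfl, rfl, hr₁, hr₂⟩ := hp.exists_eq_append_cons_of_mem_edges he
    obtain ⟨q₁, hq₁, hlen₁⟩ := exists_walk_toSubgraph_le_of_notMem_edges hmin hC heC hu
      (C.fst_mem_support_of_mem_edges heC) r₁ hr₁
    obtain ⟨q₂, hq₂, hlen₂⟩ := exists_walk_toSubgraph_le_of_notMem_edges hmin hC heC
      (C.snd_mem_support_of_mem_edges heC) hw r₂ hr₂
    have hxy : C.toSubgraph.Adj x y := Walk.adj_toSubgraph_iff_mem_edges.2 heC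
    refine ⟨q₁.append (Walk.cons h q₂), ?_, by simp; omega⟩
    simp only [Walk.toSubgraph_append, Walk.toSubgraph]
    exact sup_le hq₁ (sup_le (subgraphOfAdj_le_of_adj _ hxy) hq₂)
  · exact exists_walk_toSubgraph_le_of_notMem_edges hmin hC heC hu hw p he

end ShortestCycleThroughEdge

end SimpleGraph

open SimpleGraph in
theorem smallest_cycle_through_edge_is_min_cycle {V : Type*} (G : SimpleGraph V)
    (a : V) (C : G.Walk a a) (hC : C.IsCycle) (e : Sym2 V) (he : e ∈ C.edges)
    (hmin : ∀ (b : V) (C' : G.Walk b b), C'.IsCycle → e ∈ C'.edges →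
      C.length ≤ C'.length) :
    ∀ (u w : V) (hu : u ∈ C.toSubgraph.verts) (hw : w ∈ C.toSubgraph.verts),
      C.toSubgraph.coe.dist ⟨u, hu⟩ ⟨w, hw⟩ = G.dist u w := by
  intro u w hu hw
  have hreach : C.toSubgraph.coe.Reachable ⟨u, hu⟩ ⟨w, hw⟩ :=
    C.toSubgraph_connected.coe.preconnected _ _
  obtain ⟨p, hp, hplen⟩ := (hreach.map C.toSubgraph.hom).exists_path_of_dist
  obtain ⟨q, hq, hqlen⟩ := exists_walk_toSubgraph_le_of_isTrail hmin hC.isTrail he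
    (C.mem_verts_toSubgraph.1 hu) (C.mem_verts_toSubgraph.1 hw) p hp.isTrail
  refine le_antisymm ?_ (Subgraph.dist_le_dist_coe hreach)
  calc C.toSubgraph.coe.dist ⟨u, hu⟩ ⟨w, hw⟩ ≤ q.length := Subgraph.dist_coe_le_length q hq hu hw
    _ ≤ p.length := hqlen
    _ = G.dist u w := hplen
end

section
/- Let G be a connected graph on n vertices, let r be a vertex minimizing the connection cost D(r) = Σ_{x ≠ r} d(r, x), let T be a shortest path tree of G rooted at r, and let v ≠ r be any vertex. Then the subtree T(v) of T rooted at v satisfies |T(v)| ≤ n/2. -/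
open Finset in
theorem subtree_of_min_cost_root_small {V : Type*} [Fintype V] (G : SimpleGraph V)
    (hG : G.Connected) (r : V)
    (hr : ∀ x : V, (∑ y : V, G.dist r y) ≤ ∑ y : V, G.dist x y)
    (p : V → V) (hpr : p r = r)
    (hadj : ∀ x : V, x ≠ r → G.Adj (p x) x)
    (hdist : ∀ x : V, x ≠ r → G.dist r (p x) + 1 = G.dist r x)
    (v : V) (hv : v ≠ r) :
    2 * {x : V | ∃ m : ℕ, p^[m] x = v}.ncard ≤ Fintype.card V := by
  classical
  -- key: vertices in the subtree are far from r
  have key : ∀ m : ℕ, ∀ x : V, p^[m] x = v →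
      G.dist v x + G.dist r v ≤ G.dist r x := by
    intro m
    induction m with
    | zero => intro x hx; simp at hx; subst hx; simp
    | succ m ih =>
      intro x hx
      by_cases hxv : x = v
      · subst hxv; simp
      · have hxr : x ≠ r := by
          rintro rfl
          rw [Function.iterate_fixed hpr] at hx
          exact hv hx.symm
        rw [Function.iterate_succ_apply] at hx
        have h1 := ih (p x) hx
        have h2 : G.dist (p x) x = 1 := SimpleGraph.dist_eq_one_iff_adj.2 (hadj x hxr)
        have h3 : G.dist v x ≤ G.dist v (p x) + 1 := by
          have := hG.dist_triangle (u := v) (v := p x) (w := x)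
          omega
        have h4 := hdist x hxr
        omega
  have tri : ∀ y : V, G.dist v y ≤ G.dist r y + G.dist r v := by
    intro y
    have h1 := hG.dist_triangle (u := v) (v := r) (w := y)
    have h2 : G.dist v r = G.dist r v := SimpleGraph.dist_comm
    omega
  set S : Finset V := Finset.univ.filter (fun x => ∃ m : ℕ, p^[m] x = v) with hS
  have hncard : {x : V | ∃ m : ℕ, p^[m] x = v}.ncard = S.card := by
    rw [Set.ncard_eq_toFinset_card']
    congr 1
    ext x
    simp [hS]
  rw [hncard]
  have hdpos : 1 ≤ G.dist r v := hG.pos_dist_of_ne (Ne.symm hv)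
  -- sum over S
  have hSsum : ∑ y ∈ S, G.dist v y + S.card * G.dist r v ≤ ∑ y ∈ S, G.dist r y := by
    have h : ∑ y ∈ S, (G.dist v y + G.dist r v) ≤ ∑ y ∈ S, G.dist r y := by
      apply Finset.sum_le_sum
      intro y hy
      simp only [hS, Finset.mem_filter] at hy
      obtain ⟨m, hm⟩ := hy.2
      exact key m y hm
    simpa [Finset.sum_add_distrib, Finset.sum_const, smul_eq_mul] using h
  have hCsum : ∑ y ∈ Sᶜ, G.dist v y ≤ ∑ y ∈ Sᶜ, G.dist r y + Sᶜ.card * G.dist r v := by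
    have h : ∑ y ∈ Sᶜ, G.dist v y ≤ ∑ y ∈ Sᶜ, (G.dist r y + G.dist r v) :=
      Finset.sum_le_sum fun y _ => tri y
    simpa [Finset.sum_add_distrib, Finset.sum_const, smul_eq_mul] using h
  have hsplit1 : ∑ y : V, G.dist v y = ∑ y ∈ S, G.dist v y + ∑ y ∈ Sᶜ, G.dist v y :=
    (Finset.sum_add_sum_compl S _).symm
  have hsplit2 : ∑ y : V, G.dist r y = ∑ y ∈ S, G.dist r y + ∑ y ∈ Sᶜ, G.dist r y :=
    (Finset.sum_add_sum_compl S _).symm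
  have hrv := hr v
  have hmain : S.card * G.dist r v ≤ Sᶜ.card * G.dist r v := by omega
  have hcard : S.card ≤ Sᶜ.card := Nat.le_of_mul_le_mul_right
    (by simpa [mul_comm] using hmain) (by omega)
  have : S.card + Sᶜ.card = Fintype.card V := S.card_add_card_compl
  omega
end

section
/- Let G be a connected graph, r a vertex minimizing D(v) = Σ_{x≠v} d(v,x), and v any vertex. If T is a shortest path tree rooted at r with subtree T(v) at v, then D(v) ≤ D(r) + d(v,r)·(n − 2|T(v)|), where n is the number of vertices of G. -/
open Finset

private lemma subtree_dist {V : Type*} [Fintype V] (G : SimpleGraph V)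
    (hG : G.Connected) (r : V) (p : V → V) (hpr : p r = r)
    (hadj : ∀ x : V, x ≠ r → G.Adj (p x) x)
    (hdist : ∀ x : V, x ≠ r → G.dist r (p x) + 1 = G.dist r x)
    (v : V) :
    ∀ m x, p^[m] x = v → G.dist v x + G.dist r v ≤ G.dist r x := by
  intro m
  induction m with
  | zero =>
    intro x hx
    simp only [Function.iterate_zero, id_eq] at hx
    subst hx; simp
  | succ m ih =>
    intro x hx
    rw [Function.iterate_succ_apply] at hx
    have hfix : ∀ k, p^[k] r = r := by
      intro k; induction k with
      | zero => simp
      | succ k ihk => rw [Function.iterate_succ_apply, hpr, ihk]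
    by_cases hxr : x = r
    · have hrv : v = r := by rw [hxr, hpr, hfix m] at hx; exact hx.symm
      rw [hxr, hrv]; simp
    · have h1 := ih (p x) hx
      have h2 : G.dist v x ≤ G.dist v (p x) + 1 := by
        have := hG.dist_triangle (u := v) (v := p x) (w := x)
        have hone : G.dist (p x) x = 1 := (G.dist_eq_one_iff_adj).2 (hadj x hxr)
        omega
      have h3 := hdist x hxr
      omega

theorem connection_cost_bound {V : Type*} [Fintype V] (G : SimpleGraph V)
    (hG : G.Connected) (r : V)
    (hr : ∀ x : V, (∑ y : V, G.dist r y) ≤ ∑ y : V, G.dist x y)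
    (p : V → V) (hpr : p r = r)
    (hadj : ∀ x : V, x ≠ r → G.Adj (p x) x)
    (hdist : ∀ x : V, x ≠ r → G.dist r (p x) + 1 = G.dist r x)
    (v : V) :
    ((∑ y : V, G.dist v y : ℕ) : ℤ) ≤
      (∑ y : V, G.dist r y : ℕ) +
        (G.dist v r : ℤ) * ((Fintype.card V : ℤ) - 2 * {x : V | ∃ m : ℕ, p^[m] x = v}.ncard) := by
  classical
  set S : Finset V := Finset.univ.filter (fun x => ∃ m : ℕ, p^[m] x = v) with hS
  have hncard : ({x : V | ∃ m : ℕ, p^[m] x = v}.ncard : ℤ) = (S.card : ℤ) := by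
    congr 1
    rw [Set.ncard_eq_toFinset_card']
    congr 1
    ext x
    simp [hS]
  have hkey := subtree_dist G hG r p hpr hadj hdist v
  -- split sums
  have hsplit : (∑ y : V, (G.dist v y : ℤ)) =
      (∑ y ∈ S, (G.dist v y : ℤ)) + ∑ y ∈ Sᶜ, (G.dist v y : ℤ) :=
    (Finset.sum_add_sum_compl S _).symm
  have hsplitR : (∑ y : V, (G.dist r y : ℤ)) =
      (∑ y ∈ S, (G.dist r y : ℤ)) + ∑ y ∈ Sᶜ, (G.dist r y : ℤ) :=
    (Finset.sum_add_sum_compl S _).symm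
  have hb1 : (∑ y ∈ S, (G.dist v y : ℤ)) ≤
      ∑ y ∈ S, ((G.dist r y : ℤ) - (G.dist r v : ℤ)) := by
    apply Finset.sum_le_sum
    intro y hy
    simp only [hS, Finset.mem_filter] at hy
    obtain ⟨-, m, hm⟩ := hy
    have := hkey m y hm
    push_cast
    omega
  have hb2 : (∑ y ∈ Sᶜ, (G.dist v y : ℤ)) ≤
      ∑ y ∈ Sᶜ, ((G.dist v r : ℤ) + (G.dist r y : ℤ)) := by
    apply Finset.sum_le_sum
    intro y _
    have := hG.dist_triangle (u := v) (v := r) (w := y)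
    push_cast
    omega
  rw [Finset.sum_sub_distrib, Finset.sum_const, nsmul_eq_mul] at hb1
  rw [Finset.sum_add_distrib, Finset.sum_const, nsmul_eq_mul] at hb2
  have hcomm : (G.dist v r : ℤ) = (G.dist r v : ℤ) := by rw [G.dist_comm]
  have hcard : (S.card : ℤ) + (Sᶜ.card : ℤ) = (Fintype.card V : ℤ) := by
    have := Finset.card_add_card_compl S
    push_cast [← this]
    ring
  have hcastv : ((∑ y : V, G.dist v y : ℕ) : ℤ) = ∑ y : V, (G.dist v y : ℤ) := by push_cast; rfl
  have hcastr : ((∑ y : V, G.dist r y : ℕ) : ℤ) = ∑ y : V, (G.dist r y : ℤ) := by push_cast; rfl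
  rw [hcastv, hcastr, hncard, hsplit, hsplitR]
  nlinarith [hb1, hb2, hcomm, hcard]
end

section
/- In a Nash equilibrium graph G of the network creation game with n vertices and edge cost α, every cycle C has length |C| ≥ 2α/n + 2. In particular, if α > 2n then every cycle has length at least 7. -/
/-- The graph built from the strategies of the network creation game:
vertex `a` buys edges to the vertices in `buy a`. -/
def ncgGraph {V : Type*} (buy : V → Set V) : SimpleGraph V :=
  SimpleGraph.fromRel (fun a b => b ∈ buy a)

/-- The cost of player `x`: `α` per bought edge plus the sum of distances to all vertices. -/
noncomputable def ncgCost {V : Type*} [Fintype V] (α : ℝ) (buy : V → Set V) (x : V) : ℝ :=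
  α * (buy x).ncard + ∑ y : V, ((ncgGraph buy).dist x y : ℝ)

/-- Nash equilibrium: no player can strictly decrease its cost by a deviation
(deviations disconnecting the graph have infinite cost, hence are never improving). -/
def ncgNash {V : Type*} [Fintype V] [DecidableEq V] (α : ℝ) (buy : V → Set V) : Prop :=
  ∀ (x : V) (s' : Set V), (ncgGraph (Function.update buy x s')).Connected →
    ncgCost α buy x ≤ ncgCost α (Function.update buy x s') x

open SimpleGraph

section NCGAux

set_option linter.unusedSectionVars false

variable {V : Type*}


/-- Walk surgery: any `G`-walk either yields an `e`-free walk of no greater length, or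
splits at a traversal of `e` into two `e`-free walks. -/
lemma ncg_lemW (G : SimpleGraph V) (e : Sym2 V) :
    ∀ {x y : V} (w : G.Walk x y),
      (∃ w' : (G.deleteEdges {e}).Walk x y, w'.length ≤ w.length) ∨
      (∃ p q, s(p, q) = e ∧ ∃ (q₁ : (G.deleteEdges {e}).Walk x p)
        (q₂ : (G.deleteEdges {e}).Walk q y), q₁.length + 1 + q₂.length ≤ w.length) := by
  intro x y w
  induction w with
  | nil => exact Or.inl ⟨.nil, le_rfl⟩
  | @cons u v' y' h p ih =>
    by_cases he : s(u, v') = e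
    · rcases ih with ⟨w', hw'⟩ | ⟨p', q', hpq, q₁, q₂, hlen⟩
      · exact Or.inr ⟨u, v', he, .nil, w', by simp [Walk.length_cons]; omega⟩
      · have : (p' = u ∧ q' = v') ∨ (p' = v' ∧ q' = u) := by
          rw [← he] at hpq; exact Sym2.eq_iff.mp hpq
        rcases this with ⟨h1, h2⟩ | ⟨h1, h2⟩
        · subst h1; subst h2
          exact Or.inr ⟨p', q', he, .nil, q₂, by simp [Walk.length_cons]; omega⟩
        · subst h1; subst h2
          exact Or.inl ⟨q₂, by simp [Walk.length_cons]; omega⟩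
    · have hadj : (G.deleteEdges {e}).Adj u v' := by
        rw [deleteEdges_adj]; exact ⟨h, by simpa using he⟩
      rcases ih with ⟨w', hw'⟩ | ⟨p', q', hpq, q₁, q₂, hlen⟩
      · exact Or.inl ⟨.cons hadj w', by simp [Walk.length_cons]; omega⟩
      · exact Or.inr ⟨p', q', hpq, .cons hadj q₁, q₂, by simp [Walk.length_cons]; omega⟩

/-- Distances only grow when an edge is deleted. -/
lemma ncg_dist_del_ge (G : SimpleGraph V) (e : Sym2 V)
    (hG' : (G.deleteEdges {e}).Connected) (x y : V) :
    G.dist x y ≤ (G.deleteEdges {e}).dist x y :=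
  Reachable.dist_anti (deleteEdges_le _) (hG'.preconnected x y)

/-- Key surgery lemma: if deleting the edge `{a,b}` strictly increases the distance from `x`
to `y`, then there is an ordering `(p,q)` of `{a,b}` such that the distance decomposes through
the edge, with both remaining pieces realizable avoiding the edge. -/
lemma ncg_lemK {G : SimpleGraph V} (hG : G.Connected) {a b : V} (hab : G.Adj a b)
    (hG' : (G.deleteEdges {s(a, b)}).Connected) {x y : V}
    (hlt : G.dist x y < (G.deleteEdges {s(a, b)}).dist x y) :
    ∃ p q, s(p, q) = s(a, b) ∧
      G.dist x y = G.dist x p + 1 + G.dist q y ∧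
      (G.deleteEdges {s(a, b)}).dist x p = G.dist x p ∧
      (G.deleteEdges {s(a, b)}).dist q y = G.dist q y := by
  obtain ⟨w, hw⟩ := hG.exists_walk_length_eq_dist x y
  rcases ncg_lemW G s(a, b) w with ⟨w', hw'⟩ | ⟨p, q, hpq, q₁, q₂, hlen⟩
  · have : (G.deleteEdges {s(a, b)}).dist x y ≤ G.dist x y := le_trans (dist_le w') (by omega)
    omega
  · have hadjpq : G.Adj p q := by
      rcases Sym2.eq_iff.mp hpq with ⟨h1, h2⟩ | ⟨h1, h2⟩
      · subst h1; subst h2; exact hab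
      · subst h1; subst h2; exact hab.symm
    have h1 : G.dist x y ≤ G.dist x p + 1 + G.dist q y := by
      have t1 : G.dist x y ≤ G.dist x p + G.dist p y := hG.dist_triangle
      have t2 : G.dist p y ≤ G.dist p q + G.dist q y := hG.dist_triangle
      have t3 : G.dist p q = 1 := dist_eq_one_iff_adj.mpr hadjpq
      omega
    have h2 : G.dist x p ≤ q₁.length := by
      have := dist_le (q₁.mapLe (deleteEdges_le _))
      simpa using this
    have h5 : (G.deleteEdges {s(a, b)}).dist x p ≤ q₁.length := dist_le q₁
    have h2' : G.dist x p ≤ (G.deleteEdges {s(a, b)}).dist x p :=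
      ncg_dist_del_ge G _ hG' x p
    have h4 : (G.deleteEdges {s(a, b)}).dist q y ≤ q₂.length := dist_le q₂
    have h3 : G.dist q y ≤ (G.deleteEdges {s(a, b)}).dist q y :=
      ncg_dist_del_ge G _ hG' q y
    have hlen' : q₁.length + 1 + q₂.length ≤ G.dist x y := by omega
    exact ⟨p, q, hpq, by omega, by omega, by omega⟩

section Cycle

variable {k : ℕ} [NeZero k] {G : SimpleGraph V} {v : ZMod k → V}

lemma ncg_castInj {a b : ℕ} (ha : a < k) (hb : b < k) :
    ((a : ZMod k) = (b : ZMod k)) ↔ a = b := by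
  rw [ZMod.natCast_eq_natCast_iff', Nat.mod_eq_of_lt ha, Nat.mod_eq_of_lt hb]

/-- Two cycle edges with distinct indices are distinct (as unordered pairs). -/
lemma ncg_edgeNe (hk : 3 ≤ k) (hinj : Function.Injective v) {a b : ZMod k} (hab : a ≠ b) :
    s(v a, v (a + 1)) ≠ s(v b, v (b + 1)) := by
  intro h
  rcases Sym2.eq_iff.mp h with ⟨h1, h2⟩ | ⟨h1, h2⟩
  · exact hab (hinj h1)
  · have e1 : a = b + 1 := hinj h1
    have e2 : a + 1 = b := hinj h2
    have h20 : (2 : ZMod k) = 0 := by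
      have : a = a + 2 := by
        conv_lhs => rw [e1, ← e2]
        ring
      linear_combination -this
    have : ((2 : ℕ) : ZMod k) = ((0 : ℕ) : ZMod k) := by push_cast; exact h20
    have := (ncg_castInj (by omega) (by omega)).mp this
    omega

/-- Adjacency survives deleting a different cycle edge. -/
lemma ncg_gdAdj (hk : 3 ≤ k) (hinj : Function.Injective v)
    (hcyc : ∀ i : ZMod k, G.Adj (v i) (v (i + 1))) {i a : ZMod k} (hne : a ≠ i) :
    (G.deleteEdges {s(v i, v (i + 1))}).Adj (v a) (v (a + 1)) := by
  rw [deleteEdges_adj]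
  exact ⟨hcyc a, by simpa using ncg_edgeNe hk hinj hne⟩

/-- A walk along an arc of the cycle inside a graph `H` in which the needed edges live. -/
lemma ncg_arcWalk (H : SimpleGraph V) (p : ZMod k) (m : ℕ)
    (h : ∀ j : ℕ, j < m → H.Adj (v (p + j)) (v (p + j + 1))) :
    ∃ w : H.Walk (v p) (v (p + m)), w.length = m := by
  induction m with
  | zero => exact ⟨Walk.nil.copy rfl (by norm_num), by simp⟩
  | succ m ih =>
    obtain ⟨w, hw⟩ := ih (fun j hj => h j (by omega))
    refine ⟨(w.concat (h m (by omega))).copy rfl (by push_cast; ring_nf), ?_⟩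
    simp [Walk.length_copy, Walk.length_concat, hw]

lemma ncg_arcDist (H : SimpleGraph V) (p : ZMod k) (m : ℕ)
    (h : ∀ j : ℕ, j < m → H.Adj (v (p + j)) (v (p + j + 1))) :
    H.dist (v p) (v (p + m)) ≤ m := by
  obtain ⟨w, hw⟩ := ncg_arcWalk H p m h
  have := dist_le w; rwa [hw] at this

lemma ncg_castPred : ((k - 1 : ℕ) : ZMod k) = -1 := by
  have h1 : (1:ℕ) ≤ k := Nat.one_le_iff_ne_zero.mpr (NeZero.ne k)
  have : ((k : ℕ) : ZMod k) = 0 := ZMod.natCast_self k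
  push_cast [Nat.cast_sub h1]
  rw [this]; ring

/-- The arc avoiding a deleted cycle edge: its endpoints stay connected. -/
lemma ncg_arcAroundWalk (hk : 3 ≤ k) (hinj : Function.Injective v)
    (hcyc : ∀ i : ZMod k, G.Adj (v i) (v (i + 1))) (i : ZMod k) :
    ∃ w : (G.deleteEdges {s(v i, v (i + 1))}).Walk (v (i + 1)) (v i), w.length = k - 1 := by
  have hadj : ∀ j : ℕ, j < k - 1 →
      (G.deleteEdges {s(v i, v (i + 1))}).Adj (v (i + 1 + j)) (v (i + 1 + j + 1)) := by
    intro j hj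
    refine ncg_gdAdj hk hinj hcyc ?_
    intro hcontra
    have h1 : ((j + 1 : ℕ) : ZMod k) = ((0 : ℕ) : ZMod k) := by
      push_cast
      linear_combination hcontra
    have := (ncg_castInj (by omega) (by omega)).mp h1
    omega
  obtain ⟨w, hw⟩ := ncg_arcWalk (v := v) (G.deleteEdges {s(v i, v (i + 1))}) (i + 1) (k - 1) hadj
  have he : v (i + 1 + ((k - 1 : ℕ) : ZMod k)) = v i := by
    have h2 : i + 1 + ((k - 1 : ℕ) : ZMod k) = i := by rw [ncg_castPred]; ring
    rw [h2]
  exact ⟨w.copy rfl he, by simpa using hw⟩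

lemma ncg_arcAround (hk : 3 ≤ k) (hinj : Function.Injective v)
    (hcyc : ∀ i : ZMod k, G.Adj (v i) (v (i + 1))) (i : ZMod k) :
    (G.deleteEdges {s(v i, v (i + 1))}).dist (v (i + 1)) (v i) ≤ k - 1 := by
  obtain ⟨w, hw⟩ := ncg_arcAroundWalk hk hinj hcyc (G := G) i
  have := dist_le w
  rwa [hw] at this

lemma ncg_delConn (hk : 3 ≤ k) (hinj : Function.Injective v)
    (hcyc : ∀ i : ZMod k, G.Adj (v i) (v (i + 1))) (hG : G.Connected) (i : ZMod k) :
    (G.deleteEdges {s(v i, v (i + 1))}).Connected := by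
  set G' := G.deleteEdges {s(v i, v (i + 1))} with hG'def
  have harc : G'.Reachable (v (i + 1)) (v i) := by
    obtain ⟨w, _⟩ := ncg_arcAroundWalk hk hinj hcyc (G := G) i
    exact w.reachable
  have hreach : ∀ x y : V, G.Reachable x y → G'.Reachable x y := by
    intro x y hxy
    obtain ⟨w⟩ := hxy
    induction w with
    | nil => exact Reachable.refl _
    | @cons a b c hab p ih =>
      refine Reachable.trans ?_ ih
      by_cases he : s(a, b) = s(v i, v (i + 1))
      · rcases Sym2.eq_iff.mp he with ⟨h1, h2⟩ | ⟨h1, h2⟩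
        · rw [h1, h2]; exact harc.symm
        · rw [h1, h2]; exact harc
      · exact Adj.reachable (by rw [hG'def, deleteEdges_adj]; exact ⟨hab, by simpa using he⟩)
  have : Nonempty V := hG.nonempty
  exact ⟨fun x y => hreach x y (hG.preconnected x y)⟩

/-- Structure of a "charged" edge, buyer at the left endpoint `v i`. -/
lemma ncg_chargedFacts (hk : 3 ≤ k) (hinj : Function.Injective v)
    (hcyc : ∀ i : ZMod k, G.Adj (v i) (v (i + 1))) (hG : G.Connected) (i : ZMod k) (y : V)
    (h : G.dist (v i) y < (G.deleteEdges {s(v i, v (i + 1))}).dist (v i) y) :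
    G.dist (v i) y = 1 + G.dist (v (i + 1)) y ∧
    (G.deleteEdges {s(v i, v (i + 1))}).dist (v (i + 1)) y = G.dist (v (i + 1)) y ∧
    (G.deleteEdges {s(v i, v (i + 1))}).dist (v i) y ≤ G.dist (v i) y + (k - 2) := by
  have hG' := ncg_delConn hk hinj hcyc hG i
  obtain ⟨p, q, hpq, h1, h2, h3⟩ := ncg_lemK hG (hcyc i) hG' h
  rcases Sym2.eq_iff.mp hpq with ⟨hp, hq⟩ | ⟨hp, hq⟩
  · subst hp; subst hq
    rw [SimpleGraph.dist_self] at h1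
    have hb1 : G.dist (v i) y = 1 + G.dist (v (i + 1)) y := by omega
    refine ⟨hb1, h3, ?_⟩
    have t1 := hG'.dist_triangle (u := v i) (v := v (i + 1)) (w := y)
    have t2 : (G.deleteEdges {s(v i, v (i + 1))}).dist (v i) (v (i + 1)) ≤ k - 1 := by
      have := ncg_arcAround hk hinj hcyc (G := G) i
      rwa [SimpleGraph.dist_comm] at this
    omega
  · subst hp; subst hq
    rw [h3] at h
    have t1 := hG.dist_triangle (u := v i) (v := v (i + 1)) (w := y)
    have t2 : G.dist (v i) (v (i + 1)) = 1 := dist_eq_one_iff_adj.mpr (hcyc i)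
    omega

/-- Structure of a "charged" edge, buyer at the right endpoint `v (i+1)`. -/
lemma ncg_chargedFactsR (hk : 3 ≤ k) (hinj : Function.Injective v)
    (hcyc : ∀ i : ZMod k, G.Adj (v i) (v (i + 1))) (hG : G.Connected) (i : ZMod k) (y : V)
    (h : G.dist (v (i + 1)) y < (G.deleteEdges {s(v i, v (i + 1))}).dist (v (i + 1)) y) :
    G.dist (v (i + 1)) y = 1 + G.dist (v i) y ∧
    (G.deleteEdges {s(v i, v (i + 1))}).dist (v i) y = G.dist (v i) y ∧
    (G.deleteEdges {s(v i, v (i + 1))}).dist (v (i + 1)) y ≤ G.dist (v (i + 1)) y + (k - 2) := by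
  have hG' := ncg_delConn hk hinj hcyc hG i
  obtain ⟨p, q, hpq, h1, h2, h3⟩ := ncg_lemK hG (hcyc i) hG' h
  rcases Sym2.eq_iff.mp hpq with ⟨hp, hq⟩ | ⟨hp, hq⟩
  · subst hp; subst hq
    rw [h3] at h
    have t1 := hG.dist_triangle (u := v (i + 1)) (v := v i) (w := y)
    have t2 : G.dist (v (i + 1)) (v i) = 1 := dist_eq_one_iff_adj.mpr (hcyc i).symm
    omega
  · subst hp; subst hq
    rw [SimpleGraph.dist_self] at h1
    have hb1 : G.dist (v (i + 1)) y = 1 + G.dist (v i) y := by omega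
    refine ⟨hb1, h3, ?_⟩
    have t1 := hG'.dist_triangle (u := v (i + 1)) (v := v i) (w := y)
    have t2 : (G.deleteEdges {s(v i, v (i + 1))}).dist (v (i + 1)) (v i) ≤ k - 1 :=
      ncg_arcAround hk hinj hcyc (G := G) i
    omega

lemma ncg_natNeZero (hk : 3 ≤ k) {c : ℕ} (h0 : c ≠ 0) (hc : c < k) : ((c : ℕ) : ZMod k) ≠ 0 := by
  intro h
  have h1 : ((c : ℕ) : ZMod k) = ((0 : ℕ) : ZMod k) := by push_cast; exact h
  have := (ncg_castInj (by omega) (by omega)).mp h1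
  omega

/-- Case A (two adjacent cycle edges, common buyer `v m`), pointwise bound. -/
lemma ncg_caseA (hk : 3 ≤ k) (hinj : Function.Injective v)
    (hcyc : ∀ i : ZMod k, G.Adj (v i) (v (i + 1))) (hG : G.Connected) (m : ZMod k) (y : V) :
    (G.deleteEdges {s(v m, v (m + 1))}).dist (v m) y +
      (G.deleteEdges {s(v (m - 1), v (m - 1 + 1))}).dist (v (m - 1 + 1)) y
      ≤ 2 * G.dist (v m) y + (k - 2) := by
  have hm : m - 1 + 1 = m := by ring
  have hC1 := ncg_delConn hk hinj hcyc hG m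
  have hC2 := ncg_delConn hk hinj hcyc hG (m - 1)
  have L1a := ncg_dist_del_ge G s(v m, v (m + 1)) hC1 (v m) y
  have L1b := ncg_dist_del_ge G s(v (m - 1), v (m - 1 + 1)) hC2 (v (m - 1 + 1)) y
  simp only [hm] at L1b ⊢
  by_cases h1 : G.dist (v m) y < (G.deleteEdges {s(v m, v (m + 1))}).dist (v m) y
  · by_cases h2 : G.dist (v m) y <
        (G.deleteEdges {s(v (m - 1), v m)}).dist (v m) y
    · -- both charged: contradiction
      exfalso
      obtain ⟨cf1a, cf1b, cf1c⟩ := ncg_chargedFacts hk hinj hcyc hG m y h1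
      have h2' : G.dist (v (m - 1 + 1)) y <
          (G.deleteEdges {s(v (m - 1), v (m - 1 + 1))}).dist (v (m - 1 + 1)) y := by
        simp only [hm]; exact h2
      obtain ⟨cf2a, cf2b, cf2c⟩ := ncg_chargedFactsR hk hinj hcyc hG (m - 1) y h2'
      simp only [hm] at cf2a cf2b cf2c
      have hmne : m - 1 ≠ m := by
        intro e
        refine ncg_natNeZero (c := 1) hk (by omega) (by omega) ?_
        push_cast
        linear_combination -e
      by_cases hA : (G.deleteEdges {s(v m, v (m + 1))}).dist (v (m - 1)) y =
          G.dist (v (m - 1)) y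
      · have hadj : (G.deleteEdges {s(v m, v (m + 1))}).Adj (v (m - 1)) (v (m - 1 + 1)) :=
          ncg_gdAdj hk hinj hcyc hmne
        simp only [hm] at hadj
        have hd1 : (G.deleteEdges {s(v m, v (m + 1))}).dist (v m) (v (m - 1)) = 1 :=
          dist_eq_one_iff_adj.mpr hadj.symm
        have tri := hC1.dist_triangle (u := v m) (v := v (m - 1)) (w := y)
        omega
      · have hlt : G.dist (v (m - 1)) y <
            (G.deleteEdges {s(v m, v (m + 1))}).dist (v (m - 1)) y :=
          lt_of_le_of_ne (ncg_dist_del_ge G _ hC1 _ y) (fun h' => hA h'.symm)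
        obtain ⟨p, q, hpq, k1, k2, k3⟩ := ncg_lemK hG (hcyc m) hC1 hlt
        rcases Sym2.eq_iff.mp hpq with ⟨hp, hq⟩ | ⟨hp, hq⟩
        · subst hp; subst hq
          have pos : 0 < G.dist (v (m - 1)) (v m) :=
            hG.pos_dist_of_ne (fun e => hmne (hinj e))
          omega
        · subst hp; subst hq
          omega
    · have he2 : (G.deleteEdges {s(v (m - 1), v m)}).dist (v m) y =
          G.dist (v m) y := le_antisymm (not_lt.mp h2) L1b
      have := (ncg_chargedFacts hk hinj hcyc hG m y h1).2.2
      omega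
  · have he1 : (G.deleteEdges {s(v m, v (m + 1))}).dist (v m) y = G.dist (v m) y :=
      le_antisymm (not_lt.mp h1) L1a
    by_cases h2 : G.dist (v m) y <
        (G.deleteEdges {s(v (m - 1), v m)}).dist (v m) y
    · have h2' : G.dist (v (m - 1 + 1)) y <
          (G.deleteEdges {s(v (m - 1), v (m - 1 + 1))}).dist (v (m - 1 + 1)) y := by
        simp only [hm]; exact h2
      have := (ncg_chargedFactsR hk hinj hcyc hG (m - 1) y h2').2.2
      simp only [hm] at this
      omega
    · have he2 : (G.deleteEdges {s(v (m - 1), v m)}).dist (v m) y =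
          G.dist (v m) y := le_antisymm (not_lt.mp h2) L1b
      omega

/-- Case B (two "antipodal" cycle edges, each bought by its left endpoint), pointwise bound. -/
lemma ncg_caseB (hk : 3 ≤ k) (hinj : Function.Injective v)
    (hcyc : ∀ i : ZMod k, G.Adj (v i) (v (i + 1))) (hG : G.Connected) (y : V) :
    (G.deleteEdges {s(v 0, v (0 + 1))}).dist (v 0) y
      + (G.deleteEdges {s(v ((k / 2 : ℕ) : ZMod k), v (((k / 2 : ℕ) : ZMod k) + 1))}).dist
          (v ((k / 2 : ℕ) : ZMod k)) y
      ≤ G.dist (v 0) y + G.dist (v ((k / 2 : ℕ) : ZMod k)) y + (k - 2) := by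
  have hzero : (0 : ZMod k) + 1 = 1 := by ring
  simp only [hzero]
  set tn : ℕ := k / 2 with htn
  have htn1 : 1 ≤ tn := by omega
  have htn2 : tn + 1 ≤ k - 1 := by omega
  have htn3 : 2 * tn ≤ k := by omega
  have htn4 : k ≤ 2 * tn + 1 := by omega
  set T : ZMod k := ((tn : ℕ) : ZMod k) with hT
  have hT1 : T + 1 = ((tn + 1 : ℕ) : ZMod k) := by rw [hT]; push_cast; ring
  have hTne0 : T ≠ 0 := by
    rw [hT]
    exact ncg_natNeZero hk (by omega) (by omega)
  have h0neT : (0 : ZMod k) ≠ T := fun e => hTne0 e.symm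
  have hC0 := ncg_delConn hk hinj hcyc hG 0
  have hCt := ncg_delConn hk hinj hcyc hG T
  simp only [hzero] at hC0
  -- abbreviations
  have L1a := ncg_dist_del_ge G s(v 0, v 1) hC0 (v 0) y
  have L1t := ncg_dist_del_ge G s(v T, v (T + 1)) hCt (v T) y
  -- the four arcs
  have arcA : (G.deleteEdges {s(v 0, v 1)}).dist (v (T + 1)) (v 0) ≤ k - (tn + 1) := by
    have cond : ∀ j : ℕ, j < k - (tn + 1) →
        (G.deleteEdges {s(v 0, v 1)}).Adj (v (((tn + 1 : ℕ) : ZMod k) + j))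
          (v (((tn + 1 : ℕ) : ZMod k) + j + 1)) := by
      intro j hj
      have := ncg_gdAdj (v := v) hk hinj hcyc (i := 0) (a := ((tn + 1 : ℕ) : ZMod k) + j) ?_
      · simpa only [hzero] using this
      · intro e
        have h1 : ((tn + 1 + j : ℕ) : ZMod k) = ((0 : ℕ) : ZMod k) := by push_cast; push_cast at e; linear_combination e
        have := (ncg_castInj (by omega) (by omega)).mp h1
        omega
    have h := ncg_arcDist (v := v) (G.deleteEdges {s(v 0, v 1)}) ((tn + 1 : ℕ) : ZMod k)
      (k - (tn + 1)) cond
    have he : ((tn + 1 : ℕ) : ZMod k) + ((k - (tn + 1) : ℕ) : ZMod k) = 0 := by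
      rw [← Nat.cast_add]
      have : tn + 1 + (k - (tn + 1)) = k := by omega
      rw [this, ZMod.natCast_self]
    rw [he, ← hT1] at h
    exact h
  have arcC : (G.deleteEdges {s(v T, v (T + 1))}).dist (v (T + 1)) (v 0) ≤ k - (tn + 1) := by
    have cond : ∀ j : ℕ, j < k - (tn + 1) →
        (G.deleteEdges {s(v T, v (T + 1))}).Adj (v (((tn + 1 : ℕ) : ZMod k) + j))
          (v (((tn + 1 : ℕ) : ZMod k) + j + 1)) := by
      intro j hj
      refine ncg_gdAdj hk hinj hcyc ?_
      intro e
      have h1 : ((tn + 1 + j : ℕ) : ZMod k) = ((tn : ℕ) : ZMod k) := by push_cast; push_cast at e; linear_combination e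
      have := (ncg_castInj (by omega) (by omega)).mp h1
      omega
    have h := ncg_arcDist (v := v) (G.deleteEdges {s(v T, v (T + 1))}) ((tn + 1 : ℕ) : ZMod k)
      (k - (tn + 1)) cond
    have he : ((tn + 1 : ℕ) : ZMod k) + ((k - (tn + 1) : ℕ) : ZMod k) = 0 := by
      rw [← Nat.cast_add]
      have : tn + 1 + (k - (tn + 1)) = k := by omega
      rw [this, ZMod.natCast_self]
    rw [he, ← hT1] at h
    exact h
  have arcB : (G.deleteEdges {s(v T, v (T + 1))}).dist (v 1) (v T) ≤ tn - 1 := by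
    have cond : ∀ j : ℕ, j < tn - 1 →
        (G.deleteEdges {s(v T, v (T + 1))}).Adj (v ((1 : ZMod k) + j)) (v ((1 : ZMod k) + j + 1)) := by
      intro j hj
      refine ncg_gdAdj hk hinj hcyc ?_
      intro e
      have h1 : ((1 + j : ℕ) : ZMod k) = ((tn : ℕ) : ZMod k) := by push_cast; push_cast at e; linear_combination e
      have := (ncg_castInj (by omega) (by omega)).mp h1
      omega
    have h := ncg_arcDist (v := v) (G.deleteEdges {s(v T, v (T + 1))}) (1 : ZMod k) (tn - 1) cond
    have he : (1 : ZMod k) + ((tn - 1 : ℕ) : ZMod k) = T := by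
      rw [hT]
      have h2 : ((tn - 1 : ℕ) : ZMod k) = ((tn : ℕ) : ZMod k) - 1 := by
        have h3 : tn - 1 + 1 = tn := by omega
        have : (((tn - 1) + 1 : ℕ) : ZMod k) = ((tn : ℕ) : ZMod k) := by rw [h3]
        push_cast at this
        linear_combination this
      rw [h2]; ring
    rw [he] at h
    exact h
  have arcD : (G.deleteEdges {s(v 0, v 1)}).dist (v 1) (v T) ≤ tn - 1 := by
    have cond : ∀ j : ℕ, j < tn - 1 →
        (G.deleteEdges {s(v 0, v 1)}).Adj (v ((1 : ZMod k) + j)) (v ((1 : ZMod k) + j + 1)) := by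
      intro j hj
      have := ncg_gdAdj (v := v) hk hinj hcyc (i := 0) (a := (1 : ZMod k) + j) ?_
      · simpa only [hzero] using this
      · intro e
        have h1 : ((1 + j : ℕ) : ZMod k) = ((0 : ℕ) : ZMod k) := by push_cast; push_cast at e; linear_combination e
        have := (ncg_castInj (by omega) (by omega)).mp h1
        omega
    have h := ncg_arcDist (v := v) (G.deleteEdges {s(v 0, v 1)}) (1 : ZMod k) (tn - 1) cond
    have he : (1 : ZMod k) + ((tn - 1 : ℕ) : ZMod k) = T := by
      rw [hT]
      have h2 : ((tn - 1 : ℕ) : ZMod k) = ((tn : ℕ) : ZMod k) - 1 := by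
        have h3 : tn - 1 + 1 = tn := by omega
        have : (((tn - 1) + 1 : ℕ) : ZMod k) = ((tn : ℕ) : ZMod k) := by rw [h3]
        push_cast at this
        linear_combination this
      rw [h2]; ring
    rw [he] at h
    exact h
  have adjE : (G.deleteEdges {s(v T, v (T + 1))}).Adj (v 0) (v 1) := by
    have := ncg_gdAdj (v := v) hk hinj hcyc (i := T) (a := 0) h0neT
    simpa only [hzero] using this
  have adjF : (G.deleteEdges {s(v 0, v 1)}).Adj (v T) (v (T + 1)) := by
    have := ncg_gdAdj (v := v) hk hinj hcyc (i := 0) (a := T) hTne0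
    simpa only [hzero] using this
  by_cases ch0 : G.dist (v 0) y < (G.deleteEdges {s(v 0, v 1)}).dist (v 0) y
  · by_cases cht : G.dist (v T) y < (G.deleteEdges {s(v T, v (T + 1))}).dist (v T) y
    · -- both edges charged
      have cf0 := ncg_chargedFacts hk hinj hcyc hG 0 y (by simpa only [hzero] using ch0)
      simp only [hzero] at cf0
      obtain ⟨cf0a, cf0b, cf0c⟩ := cf0
      obtain ⟨cfta, cftb, cftc⟩ := ncg_chargedFacts hk hinj hcyc hG T y cht
      by_cases hA : (G.deleteEdges {s(v 0, v 1)}).dist (v (T + 1)) y = G.dist (v (T + 1)) y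
      · by_cases hB : (G.deleteEdges {s(v T, v (T + 1))}).dist (v 1) y = G.dist (v 1) y
        · -- A ∧ B
          have r0 : (G.deleteEdges {s(v 0, v 1)}).dist (v 0) y ≤
              (G.deleteEdges {s(v 0, v 1)}).dist (v 0) (v (T + 1)) +
              (G.deleteEdges {s(v 0, v 1)}).dist (v (T + 1)) y := hC0.dist_triangle
          have r0' : (G.deleteEdges {s(v 0, v 1)}).dist (v 0) (v (T + 1)) ≤ k - (tn + 1) := by
            rwa [SimpleGraph.dist_comm] at arcA
          have rt : (G.deleteEdges {s(v T, v (T + 1))}).dist (v T) y ≤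
              (G.deleteEdges {s(v T, v (T + 1))}).dist (v T) (v 1) +
              (G.deleteEdges {s(v T, v (T + 1))}).dist (v 1) y := hCt.dist_triangle
          have rt' : (G.deleteEdges {s(v T, v (T + 1))}).dist (v T) (v 1) ≤ tn - 1 := by
            rwa [SimpleGraph.dist_comm] at arcB
          omega
        · -- A ∧ ¬B
          have hltB : G.dist (v 1) y < (G.deleteEdges {s(v T, v (T + 1))}).dist (v 1) y :=
            lt_of_le_of_ne (ncg_dist_del_ge G _ hCt _ y) (fun h' => hB h'.symm)
          obtain ⟨p, q, hpq, k1, k2, k3⟩ := ncg_lemK hG (hcyc T) hCt hltB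
          rcases Sym2.eq_iff.mp hpq with ⟨hp, hq⟩ | ⟨hp, hq⟩
          · subst hp; subst hq
            -- d(v1) = d(v1, vT) + 1 + d(v(T+1)), and dist in Gt from v1 to vT is realizable
            have s1 : (G.deleteEdges {s(v T, v (T + 1))}).dist (v T) (v 0) ≤
                (G.deleteEdges {s(v T, v (T + 1))}).dist (v T) (v 1) +
                (G.deleteEdges {s(v T, v (T + 1))}).dist (v 1) (v 0) := hCt.dist_triangle
            have s2 : (G.deleteEdges {s(v T, v (T + 1))}).dist (v T) y ≤
                (G.deleteEdges {s(v T, v (T + 1))}).dist (v T) (v 0) +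
                (G.deleteEdges {s(v T, v (T + 1))}).dist (v 0) y := hCt.dist_triangle
            have s3 : (G.deleteEdges {s(v T, v (T + 1))}).dist (v 0) y ≤
                (G.deleteEdges {s(v T, v (T + 1))}).dist (v 0) (v (T + 1)) +
                (G.deleteEdges {s(v T, v (T + 1))}).dist (v (T + 1)) y := hCt.dist_triangle
            have s4 : (G.deleteEdges {s(v T, v (T + 1))}).dist (v T) (v 1) =
                G.dist (v 1) (v T) := by rwa [SimpleGraph.dist_comm] at k2
            have s5 : (G.deleteEdges {s(v T, v (T + 1))}).dist (v 1) (v 0) ≤ 1 := by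
              have := dist_eq_one_iff_adj.mpr adjE.symm
              omega
            have s6 : (G.deleteEdges {s(v T, v (T + 1))}).dist (v 0) (v (T + 1)) ≤
                k - (tn + 1) := by rwa [SimpleGraph.dist_comm] at arcC
            have r0 : (G.deleteEdges {s(v 0, v 1)}).dist (v 0) y ≤
                (G.deleteEdges {s(v 0, v 1)}).dist (v 0) (v (T + 1)) +
                (G.deleteEdges {s(v 0, v 1)}).dist (v (T + 1)) y := hC0.dist_triangle
            have r0' : (G.deleteEdges {s(v 0, v 1)}).dist (v 0) (v (T + 1)) ≤ k - (tn + 1) := by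
              rwa [SimpleGraph.dist_comm] at arcA
            omega
          · subst hp; subst hq
            omega
      · -- ¬A (then B follows)
        have hltA : G.dist (v (T + 1)) y < (G.deleteEdges {s(v 0, v 1)}).dist (v (T + 1)) y :=
          lt_of_le_of_ne (ncg_dist_del_ge G _ hC0 _ y) (fun h' => hA h'.symm)
        have hab0 : G.Adj (v 0) (v 1) := by simpa only [hzero] using hcyc 0
        obtain ⟨p, q, hpq, k1, k2, k3⟩ := ncg_lemK hG hab0 hC0 hltA
        rcases Sym2.eq_iff.mp hpq with ⟨hp, hq⟩ | ⟨hp, hq⟩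
        · subst hp; subst hq
          -- d(v(T+1)) = D' + 1 + d(v1)
          have hB : (G.deleteEdges {s(v T, v (T + 1))}).dist (v 1) y = G.dist (v 1) y := by
            by_contra hB'
            have hltB : G.dist (v 1) y < (G.deleteEdges {s(v T, v (T + 1))}).dist (v 1) y :=
              lt_of_le_of_ne (ncg_dist_del_ge G _ hCt _ y) (fun h' => hB' h'.symm)
            obtain ⟨p', q', hpq', k1', k2', k3'⟩ := ncg_lemK hG (hcyc T) hCt hltB
            rcases Sym2.eq_iff.mp hpq' with ⟨hp', hq'⟩ | ⟨hp', hq'⟩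
            · subst hp'; subst hq'
              omega
            · subst hp'; subst hq'
              omega
          have rt : (G.deleteEdges {s(v T, v (T + 1))}).dist (v T) y ≤
              (G.deleteEdges {s(v T, v (T + 1))}).dist (v T) (v 1) +
              (G.deleteEdges {s(v T, v (T + 1))}).dist (v 1) y := hCt.dist_triangle
          have rt' : (G.deleteEdges {s(v T, v (T + 1))}).dist (v T) (v 1) ≤ tn - 1 := by
            rwa [SimpleGraph.dist_comm] at arcB
          have s1 : (G.deleteEdges {s(v 0, v 1)}).dist (v 0) y ≤
              (G.deleteEdges {s(v 0, v 1)}).dist (v 0) (v 1) +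
              (G.deleteEdges {s(v 0, v 1)}).dist (v 1) y := hC0.dist_triangle
          have s2 : (G.deleteEdges {s(v 0, v 1)}).dist (v 0) (v 1) ≤
              (G.deleteEdges {s(v 0, v 1)}).dist (v 0) (v (T + 1)) +
              (G.deleteEdges {s(v 0, v 1)}).dist (v (T + 1)) (v 1) := hC0.dist_triangle
          have s3 : (G.deleteEdges {s(v 0, v 1)}).dist (v (T + 1)) (v 1) ≤
              (G.deleteEdges {s(v 0, v 1)}).dist (v (T + 1)) (v T) +
              (G.deleteEdges {s(v 0, v 1)}).dist (v T) (v 1) := hC0.dist_triangle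
          have s4 : (G.deleteEdges {s(v 0, v 1)}).dist (v 0) (v (T + 1)) =
              G.dist (v (T + 1)) (v 0) := by rwa [SimpleGraph.dist_comm] at k2
          have s5 : (G.deleteEdges {s(v 0, v 1)}).dist (v (T + 1)) (v T) ≤ 1 := by
            have := dist_eq_one_iff_adj.mpr adjF.symm
            omega
          have s6 : (G.deleteEdges {s(v 0, v 1)}).dist (v T) (v 1) ≤ tn - 1 := by
            rwa [SimpleGraph.dist_comm] at arcD
          omega
        · subst hp; subst hq
          omega
    · -- t-edge uncharged
      have het : (G.deleteEdges {s(v T, v (T + 1))}).dist (v T) y = G.dist (v T) y :=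
        le_antisymm (not_lt.mp cht) L1t
      have := (ncg_chargedFacts hk hinj hcyc hG 0 y (by simpa only [hzero] using ch0)).2.2
      simp only [hzero] at this
      omega
  · have he0 : (G.deleteEdges {s(v 0, v 1)}).dist (v 0) y = G.dist (v 0) y :=
      le_antisymm (not_lt.mp ch0) L1a
    by_cases cht : G.dist (v T) y < (G.deleteEdges {s(v T, v (T + 1))}).dist (v T) y
    · have := (ncg_chargedFacts hk hinj hcyc hG T y cht).2.2
      omega
    · have het : (G.deleteEdges {s(v T, v (T + 1))}).dist (v T) y = G.dist (v T) y :=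
        le_antisymm (not_lt.mp cht) L1t
      omega

end Cycle

section Update

variable {V : Type*} [DecidableEq V]

lemma ncg_updateGraph (buy : V → Set V) (x w : V) (hw : w ∈ buy x) (hxw : x ∉ buy w)
    (hwx : w ≠ x) :
    ncgGraph (Function.update buy x (buy x \ {w})) = (ncgGraph buy).deleteEdges {s(x, w)} := by
  ext a b
  by_cases hax : a = x <;> by_cases hbx : b = x
  · subst hax; subst hbx
    simp [ncgGraph, SimpleGraph.fromRel_adj]
  · subst hax
    simp only [ncgGraph, SimpleGraph.fromRel_adj, SimpleGraph.deleteEdges_adj,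
      Set.mem_singleton_iff, Sym2.eq_iff, Function.update_self, Function.update_of_ne hbx,
      Set.mem_diff, Set.mem_singleton_iff]
    constructor
    · rintro ⟨hne, ⟨hb, hbw⟩ | hb⟩
      · exact ⟨⟨hne, Or.inl hb⟩, by rintro (⟨-, rfl⟩ | ⟨rfl, -⟩); exact hbw rfl; exact hwx rfl⟩
      · refine ⟨⟨hne, Or.inr hb⟩, ?_⟩
        rintro (⟨-, rfl⟩ | ⟨rfl, -⟩)
        · exact hxw hb
        · exact hwx rfl
    · rintro ⟨⟨hne, hb | hb⟩, hs⟩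
      · refine ⟨hne, Or.inl ⟨hb, fun hbw => hs (Or.inl ⟨trivial, hbw⟩)⟩⟩
      · exact ⟨hne, Or.inr hb⟩
  · subst hbx
    simp only [ncgGraph, SimpleGraph.fromRel_adj, SimpleGraph.deleteEdges_adj,
      Set.mem_singleton_iff, Sym2.eq_iff, Function.update_self, Function.update_of_ne hax,
      Set.mem_diff, Set.mem_singleton_iff]
    constructor
    · rintro ⟨hne, hb | ⟨ha, haw⟩⟩
      · refine ⟨⟨hne, Or.inl hb⟩, ?_⟩
        rintro (⟨rfl, -⟩ | ⟨rfl, -⟩)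
        · exact hne rfl
        · exact hxw hb
      · exact ⟨⟨hne, Or.inr ha⟩, by rintro (⟨rfl, -⟩ | ⟨rfl, -⟩); exact hne rfl; exact haw rfl⟩
    · rintro ⟨⟨hne, hb | hb⟩, hs⟩
      · exact ⟨hne, Or.inl hb⟩
      · refine ⟨hne, Or.inr ⟨hb, fun haw => hs (Or.inr ⟨haw, trivial⟩)⟩⟩
  · simp only [ncgGraph, SimpleGraph.fromRel_adj, SimpleGraph.deleteEdges_adj,
      Set.mem_singleton_iff, Sym2.eq_iff, Function.update_of_ne hax, Function.update_of_ne hbx]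
    constructor
    · rintro ⟨hne, hb⟩
      exact ⟨⟨hne, hb⟩, by rintro (⟨rfl, -⟩ | ⟨-, rfl⟩); exact hax rfl; exact hbx rfl⟩
    · rintro ⟨⟨hne, hb⟩, -⟩
      exact ⟨hne, hb⟩

lemma ncg_updateGraph_both (buy : V → Set V) (x w : V) (hxw : x ∈ buy w) (hwx : w ≠ x) :
    ncgGraph (Function.update buy x (buy x \ {w})) = ncgGraph buy := by
  ext a b
  by_cases hax : a = x <;> by_cases hbx : b = x
  · subst hax; subst hbx
    simp [ncgGraph, SimpleGraph.fromRel_adj]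
  · subst hax
    simp only [ncgGraph, SimpleGraph.fromRel_adj, Function.update_self,
      Function.update_of_ne hbx, Set.mem_diff, Set.mem_singleton_iff]
    constructor
    · rintro ⟨hne, ⟨hb, -⟩ | hb⟩
      · exact ⟨hne, Or.inl hb⟩
      · exact ⟨hne, Or.inr hb⟩
    · rintro ⟨hne, hb | hb⟩
      · by_cases hbw : b = w
        · subst hbw; exact ⟨hne, Or.inr hxw⟩
        · exact ⟨hne, Or.inl ⟨hb, hbw⟩⟩
      · exact ⟨hne, Or.inr hb⟩
  · subst hbx
    simp only [ncgGraph, SimpleGraph.fromRel_adj, Function.update_self,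
      Function.update_of_ne hax, Set.mem_diff, Set.mem_singleton_iff]
    constructor
    · rintro ⟨hne, hb | ⟨ha, -⟩⟩
      · exact ⟨hne, Or.inl hb⟩
      · exact ⟨hne, Or.inr ha⟩
    · rintro ⟨hne, hb | hb⟩
      · exact ⟨hne, Or.inl hb⟩
      · by_cases haw : a = w
        · subst haw; exact ⟨hne, Or.inl hxw⟩
        · exact ⟨hne, Or.inr ⟨hb, haw⟩⟩
  · simp only [ncgGraph, SimpleGraph.fromRel_adj, Function.update_of_ne hax,
      Function.update_of_ne hbx]

end Update

lemma ncg_combine {V : Type*} [Fintype V] {G G1 G2 : SimpleGraph V} {x1 x2 : V} {α : ℝ}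
    {k : ℕ} (hk : 3 ≤ k)
    (h1 : α ≤ (∑ y, (G1.dist x1 y : ℝ)) - ∑ y, (G.dist x1 y : ℝ))
    (h2 : α ≤ (∑ y, (G2.dist x2 y : ℝ)) - ∑ y, (G.dist x2 y : ℝ))
    (hpt : ∀ y, G1.dist x1 y + G2.dist x2 y ≤ G.dist x1 y + G.dist x2 y + (k - 2)) :
    2 * α ≤ (Fintype.card V : ℝ) * ((k : ℝ) - 2) := by
  have hc : ((k - 2 : ℕ) : ℝ) = (k : ℝ) - 2 := by
    have h2k : (2 : ℕ) ≤ k := by omega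
    push_cast [Nat.cast_sub h2k]
    ring
  have hsum : (∑ y : V, ((G1.dist x1 y : ℝ) + (G2.dist x2 y : ℝ))) ≤
      ∑ y : V, ((G.dist x1 y : ℝ) + (G.dist x2 y : ℝ) + ((k : ℝ) - 2)) := by
    apply Finset.sum_le_sum
    intro y _
    rw [← hc]
    exact_mod_cast hpt y
  simp only [Finset.sum_add_distrib, Finset.sum_const, Finset.card_univ, nsmul_eq_mul] at hsum
  linarith

end NCGAux

theorem girth_lower_bound {V : Type*} [Fintype V] [DecidableEq V] (α : ℝ) (buy : V → Set V)
    (hbuy : ∀ x : V, x ∉ buy x)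
    (hconn : (ncgGraph buy).Connected) (hNE : ncgNash α buy)
    (k : ℕ) [NeZero k] (hk : 3 ≤ k) (v : ZMod k → V) (hinj : Function.Injective v)
    (hcyc : ∀ i : ZMod k, (ncgGraph buy).Adj (v i) (v (i + 1))) :
    (k : ℝ) ≥ 2 * α / (Fintype.card V) + 2 ∧ (α > 2 * (Fintype.card V) → 7 ≤ k) := by
  classical
  have hV : Nonempty V := ⟨v 0⟩
  have hn0 : 0 < Fintype.card V := Fintype.card_pos
  have hnR : (0 : ℝ) < (Fintype.card V : ℝ) := by exact_mod_cast hn0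
  suffices hmain : 2 * α ≤ (Fintype.card V : ℝ) * ((k : ℝ) - 2) by
    constructor
    · have h1 : 2 * α / (Fintype.card V : ℝ) ≤ (k : ℝ) - 2 := by
        rw [div_le_iff₀ hnR]
        linarith [hmain]
      linarith
    · intro hα2
      have h4 : (4 : ℝ) * (Fintype.card V : ℝ) < (Fintype.card V : ℝ) * ((k : ℝ) - 2) := by
        linarith
      have h6 : (6 : ℝ) < (k : ℝ) := by nlinarith
      have h6' : (6 : ℕ) < k := by exact_mod_cast h6
      omega
  by_cases hα : 0 < α
  swap
  · have hk2 : (1 : ℝ) ≤ (k : ℝ) - 2 := by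
      have : (3 : ℝ) ≤ (k : ℝ) := by exact_mod_cast hk
      linarith
    nlinarith
  -- the Nash inequality for deleting a bought edge
  have keyNash : ∀ x w : V, w ∈ buy x → x ∉ buy w →
      ((ncgGraph buy).deleteEdges {s(x, w)}).Connected →
      α ≤ (∑ y, (((ncgGraph buy).deleteEdges {s(x, w)}).dist x y : ℝ)) -
          ∑ y, ((ncgGraph buy).dist x y : ℝ) := by
    intro x w hw hxw hconn'
    have hwx : w ≠ x := fun e => hbuy x (e ▸ hw)
    have hupd := ncg_updateGraph buy x w hw hxw hwx
    have hN := hNE x (buy x \ {w}) (by rw [hupd]; exact hconn')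
    unfold ncgCost at hN
    rw [Function.update_self, hupd] at hN
    have hcard : (buy x).ncard = (buy x \ {w}).ncard + 1 := by
      conv_lhs => rw [← Set.insert_eq_of_mem hw, ← Set.insert_diff_singleton]
      rw [Set.ncard_insert_of_notMem (by simp) (Set.toFinite _)]
    rw [hcard] at hN
    push_cast at hN
    linarith
  -- no edge is bought from both sides
  have notBoth : ∀ i : ZMod k, ¬(v (i + 1) ∈ buy (v i) ∧ v i ∈ buy (v (i + 1))) := by
    rintro i ⟨h1, h2⟩
    have hwx : v (i + 1) ≠ v i := ((hcyc i).ne).symm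
    have hupd := ncg_updateGraph_both buy (v i) (v (i + 1)) h2 hwx
    have hN := hNE (v i) (buy (v i) \ {v (i + 1)}) (by rw [hupd]; exact hconn)
    unfold ncgCost at hN
    rw [Function.update_self, hupd] at hN
    have hcard : (buy (v i)).ncard = (buy (v i) \ {v (i + 1)}).ncard + 1 := by
      conv_lhs => rw [← Set.insert_eq_of_mem h1, ← Set.insert_diff_singleton]
      rw [Set.ncard_insert_of_notMem (by simp) (Set.toFinite _)]
    rw [hcard] at hN
    push_cast at hN
    linarith
  have heither : ∀ i : ZMod k, v (i + 1) ∈ buy (v i) ∨ v i ∈ buy (v (i + 1)) := by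
    intro i
    have h := hcyc i
    simp only [ncgGraph, SimpleGraph.fromRel_adj] at h
    exact h.2
  set P : ZMod k → Prop := fun i => v (i + 1) ∈ buy (v i) with hP
  by_cases hAex : ∃ m : ZMod k, P m ∧ ¬P (m - 1)
  · -- Case A : some vertex buys both of its cycle edges
    obtain ⟨m, hPm, hPm1⟩ := hAex
    have hm : m - 1 + 1 = m := by ring
    have hb1 : v (m + 1) ∈ buy (v m) := hPm
    have hb2 : v m ∉ buy (v (m + 1)) := fun h => notBoth m ⟨hPm, h⟩
    have hb3 : v (m - 1) ∈ buy (v m) := by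
      rcases heither (m - 1) with h | h
      · exact absurd h hPm1
      · rwa [hm] at h
    have hb4 : v m ∉ buy (v (m - 1)) := by
      intro h'
      apply hPm1
      show v (m - 1 + 1) ∈ buy (v (m - 1))
      rwa [hm]
    have hsw : s(v (m - 1), v m) = s(v m, v (m - 1)) := Sym2.eq_swap
    have hC1 := ncg_delConn hk hinj hcyc hconn m
    have hC2 := ncg_delConn hk hinj hcyc hconn (m - 1)
    simp only [hm] at hC2
    rw [hsw] at hC2
    have hN1 := keyNash (v m) (v (m + 1)) hb1 hb2 hC1
    have hN2 := keyNash (v m) (v (m - 1)) hb3 hb4 hC2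
    refine ncg_combine hk hN1 hN2 ?_
    intro y
    have h := ncg_caseA hk hinj hcyc hconn m y
    simp only [hm] at h
    rw [hsw] at h
    omega
  · push_neg at hAex
    have hall : ∀ m : ZMod k, P m → P (m - 1) := hAex
    by_cases hP0 : P 0
    · -- all edges bought by their left endpoint
      have hallP : ∀ i : ZMod k, P i := by
        have hnat : ∀ m : ℕ, P (-(m : ZMod k)) := by
          intro m
          induction m with
          | zero => simpa using hP0
          | succ m ih =>
            have h := hall _ ih
            have he : -(m : ZMod k) - 1 = -(((m + 1 : ℕ) : ZMod k)) := by push_cast; ring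
            rwa [he] at h
        intro i
        have h := hnat ((-i).val)
        rwa [ZMod.natCast_zmod_val, neg_neg] at h
      set T : ZMod k := ((k / 2 : ℕ) : ZMod k) with hT
      have hb1 : v (0 + 1) ∈ buy (v 0) := hallP 0
      have hb2 : v 0 ∉ buy (v (0 + 1)) := fun h => notBoth 0 ⟨hallP 0, h⟩
      have hb3 : v (T + 1) ∈ buy (v T) := hallP T
      have hb4 : v T ∉ buy (v (T + 1)) := fun h => notBoth T ⟨hallP T, h⟩
      have hC1 := ncg_delConn hk hinj hcyc hconn 0
      have hC2 := ncg_delConn hk hinj hcyc hconn T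
      have hN1 := keyNash (v 0) (v (0 + 1)) hb1 hb2 hC1
      have hN2 := keyNash (v T) (v (T + 1)) hb3 hb4 hC2
      exact ncg_combine hk hN1 hN2 (fun y => ncg_caseB hk hinj hcyc hconn y)
    · -- all edges bought by their right endpoint : use the reflected cycle
      have hallN : ∀ i : ZMod k, ¬P i := by
        have hnat : ∀ m : ℕ, ¬P ((m : ℕ) : ZMod k) := by
          intro m
          induction m with
          | zero => simpa using hP0
          | succ m ih =>
            intro hPm
            apply ih
            have h := hall _ hPm
            have he : ((m + 1 : ℕ) : ZMod k) - 1 = ((m : ℕ) : ZMod k) := by push_cast; ring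
            rwa [he] at h
        intro i
        have h := hnat i.val
        rwa [ZMod.natCast_zmod_val] at h
      set w : ZMod k → V := fun j => v (-j) with hwdef
      have hinjw : Function.Injective w := fun a b h => neg_injective (hinj h)
      have hcycw : ∀ i : ZMod k, (ncgGraph buy).Adj (w i) (w (i + 1)) := by
        intro i
        have h := hcyc (-i - 1)
        have he : -i - 1 + 1 = -i := by ring
        rw [he] at h
        have e1 : w i = v (-i) := rfl
        have e2 : w (i + 1) = v (-i - 1) := by
          show v (-(i + 1)) = v (-i - 1)
          have : -(i + 1) = -i - 1 := by ring
          rw [this]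
        rw [e1, e2]
        exact h.symm
      have hbuyw : ∀ i : ZMod k, w (i + 1) ∈ buy (w i) ∧ w i ∉ buy (w (i + 1)) := by
        intro i
        have e1 : w i = v (-i) := rfl
        have e2 : w (i + 1) = v (-i - 1) := by
          show v (-(i + 1)) = v (-i - 1)
          have : -(i + 1) = -i - 1 := by ring
          rw [this]
        have he : -i - 1 + 1 = -i := by ring
        constructor
        · rw [e1, e2]
          rcases heither (-i - 1) with h | h
          · exfalso
            apply hallN (-i - 1)
            exact h
          · rwa [he] at h
        · rw [e1, e2]
          intro h'
          apply hallN (-i - 1)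
          show v (-i - 1 + 1) ∈ buy (v (-i - 1))
          rwa [he]
      set T : ZMod k := ((k / 2 : ℕ) : ZMod k) with hT
      have hC1 := ncg_delConn hk hinjw hcycw hconn 0
      have hC2 := ncg_delConn hk hinjw hcycw hconn T
      have hN1 := keyNash (w 0) (w (0 + 1)) (hbuyw 0).1 (hbuyw 0).2 hC1
      have hN2 := keyNash (w T) (w (T + 1)) (hbuyw T).1 (hbuyw T).2 hC2
      exact ncg_combine hk hN1 hN2 (fun y => ncg_caseB hk hinjw hcycw hconn y)
end

section
/- Let G be a connected graph and suppose v has degree 2 in G with neighbors u and w. Then every cycle through v contains both edges uv and vw, and any shortest cycle C(v) through v yields: upon deleting edge uv, the distance from u to v increases by exactly |C(v)| − 2. -/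
/-!
A cycle at `v` leaves `v` along its first edge and returns along its last edge, and these two
edges are distinct; when `v` has only the neighbours `u` and `w`, they must be `vu` and `vw`.
Dropping the edge `vu` from a cycle at `v` leaves a `u`–`v` walk of length `|C| - 1` avoiding
`vu`, and conversely a shortest `u`–`v` path in `G - uv` closes up with `vu` to a cycle at `v`.
-/

namespace SimpleGraph

variable {V : Type*} {G : SimpleGraph V} {u v w : V}

namespace Walk

lemma IsCycle.snd_penultimate_eq_of_neighborSet_eq_pair {c : G.Walk v v} (hc : c.IsCycle)
    (hdeg : G.neighborSet v = {u, w}) :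
    (c.snd = u ∧ c.penultimate = w) ∨ (c.snd = w ∧ c.penultimate = u) := by
  have hsnd : c.snd ∈ G.neighborSet v := c.adj_snd hc.not_nil
  have hpen : c.penultimate ∈ G.neighborSet v := (c.adj_penultimate hc.not_nil).symm
  rw [hdeg] at hsnd hpen
  have hne := hc.snd_ne_penultimate
  simp only [Set.mem_insert_iff, Set.mem_singleton_iff] at hsnd hpen
  grind

lemma IsCycle.mem_edges_of_neighborSet_eq_pair {c : G.Walk v v} (hc : c.IsCycle)
    (hdeg : G.neighborSet v = {u, w}) : s(u, v) ∈ c.edges ∧ s(v, w) ∈ c.edges := by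
  have hfirst : s(v, c.snd) ∈ c.edges := c.mk_start_snd_mem_edges hc.not_nil
  have hlast : s(c.penultimate, v) ∈ c.edges := c.mk_penultimate_end_mem_edges hc.not_nil
  rcases hc.snd_penultimate_eq_of_neighborSet_eq_pair hdeg with ⟨rfl, rfl⟩ | ⟨rfl, rfl⟩
  · exact ⟨Sym2.eq_swap ▸ hfirst, Sym2.eq_swap ▸ hlast⟩
  · exact ⟨hlast, hfirst⟩

lemma IsCycle.dist_deleteEdges_le_of_snd_eq {c : G.Walk v v} (hc : c.IsCycle) (hu : c.snd = u) :
    (G.deleteEdges {s(u, v)}).dist u v ≤ c.length - 1 := by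
  subst hu
  have hnodup := hc.edges_nodup
  rw [← c.cons_tail_eq hc.not_nil, edges_cons, List.nodup_cons, Sym2.eq_swap] at hnodup
  have havoid : ∀ e ∈ c.tail.edges, e ∉ ({s(c.snd, v)} : Set (Sym2 V)) := by
    rintro e he rfl
    exact hnodup.1 he
  calc (G.deleteEdges {s(c.snd, v)}).dist c.snd v
      ≤ (c.tail.toDeleteEdges _ havoid).length := dist_le _
    _ = c.length - 1 := by rw [length_transfer, length_tail]

lemma IsCycle.dist_deleteEdges_le_of_penultimate_eq {c : G.Walk v v} (hc : c.IsCycle)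
    (hu : c.penultimate = u) : (G.deleteEdges {s(u, v)}).dist u v ≤ c.length - 1 := by
  simpa using hc.reverse.dist_deleteEdges_le_of_snd_eq (c.snd_reverse.trans hu)

end Walk

lemma length_le_dist_deleteEdges_add_one {c : G.Walk v v}
    (hmin : ∀ c' : G.Walk v v, c'.IsCycle → c.length ≤ c'.length) (hvu : G.Adj v u)
    (hreach : (G.deleteEdges {s(u, v)}).Reachable u v) :
    c.length ≤ (G.deleteEdges {s(u, v)}).dist u v + 1 := by
  obtain ⟨p, hp, hlen⟩ := hreach.exists_path_of_dist
  have hpG : (p.mapLe (G.deleteEdges_le _)).IsPath := hp.mapLe _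
  have havoid : s(v, u) ∉ (p.mapLe (G.deleteEdges_le _)).edges := by
    rw [Walk.edges_mapLe_eq_edges]
    intro he
    simpa [Sym2.eq_swap] using p.edges_subset_edgeSet he
  have hcycle := (Walk.cons_isCycle_iff _ hvu).mpr ⟨hpG, havoid⟩
  simpa [hlen] using hmin _ hcycle

end SimpleGraph

theorem degree_two_cycle_edges_general {V : Type*} (G : SimpleGraph V)
    (v u w : V) (hvu : G.Adj v u)
    (hdeg : G.neighborSet v = {u, w}) :
    (∀ (c : G.Walk v v), c.IsCycle → s(u, v) ∈ c.edges ∧ s(v, w) ∈ c.edges) ∧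
      (∀ (c : G.Walk v v), c.IsCycle →
        (∀ c' : G.Walk v v, c'.IsCycle → c.length ≤ c'.length) →
        (G.deleteEdges {s(u, v)}).Connected →
        (G.deleteEdges {s(u, v)}).dist u v = G.dist u v + (c.length - 2)) := by
  refine ⟨fun c hc ↦ hc.mem_edges_of_neighborSet_eq_pair hdeg, fun c hc hmin hconn ↦ ?_⟩
  have hupper : (G.deleteEdges {s(u, v)}).dist u v ≤ c.length - 1 := by
    rcases hc.snd_penultimate_eq_of_neighborSet_eq_pair hdeg with ⟨hsnd, -⟩ | ⟨-, hpen⟩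
    · exact hc.dist_deleteEdges_le_of_snd_eq hsnd
    · exact hc.dist_deleteEdges_le_of_penultimate_eq hpen
  have hlower := SimpleGraph.length_le_dist_deleteEdges_add_one hmin hvu (hconn.preconnected u v)
  have hthree := hc.three_le_length
  rw [SimpleGraph.dist_eq_one_iff_adj.mpr hvu.symm]
  omega

theorem degree_two_cycle_edges {V : Type*} (G : SimpleGraph V) (hG : G.Connected)
    (v u w : V) (huw : u ≠ w) (hvu : G.Adj v u) (hvw : G.Adj v w)
    (hdeg : G.neighborSet v = {u, w}) :
    (∀ (c : G.Walk v v), c.IsCycle → s(u, v) ∈ c.edges ∧ s(v, w) ∈ c.edges) ∧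
      (∀ (c : G.Walk v v), c.IsCycle →
        (∀ c' : G.Walk v v, c'.IsCycle → c.length ≤ c'.length) →
        (G.deleteEdges {s(u, v)}).Connected →
        (G.deleteEdges {s(u, v)}).dist u v = G.dist u v + (c.length - 2)) :=
  degree_two_cycle_edges_general G v u w hvu hdeg
end
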